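/- Let k > 0 and x > 0 be fixed. Then the function ν ↦ 𝓘^k_ν(x) is log-convex on (−k, ∞); that is, for all ν₁, ν₂ > −k and all α ∈ [0,1], 𝓘^k_{αν₁ + (1−α)ν₂}(x) ≤ (𝓘^k_{ν₁}(x))^α · (𝓘^k_{ν₂}(x))^{1−α}. -/

import Mathlib

open Real

/-- The k-gamma function, `Γ_k(x) = k^(x/k - 1) * Γ(x/k)`. -/
noncomputable def kGamma (k x : ℝ) : ℝ := k ^ (x / k - 1) * Real.Gamma (x / k)

/-- The normalized modified k-Bessel function `𝓘^k_ν(x) = Σ f_r(ν) x^(2r)`. -/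
noncomputable def kBesselI (k ν x : ℝ) : ℝ :=
  ∑' r : ℕ, kGamma k (ν + k) / (kGamma k (r * k + ν + k) * 4 ^ r * (r.factorial : ℝ)) *
    x ^ (2 * r)

/-!
With `t = (ν + k) / k`, the recursion of `Γ` gives `Γ_k(rk + ν + k) = k^r (t)_r Γ_k(ν + k)`, so
`𝓘^k_ν(x) = Σ_r (x² / 4k)^r / (r! (t)_r)` with the rising factorial
`(t)_r = t (t + 1) ⋯ (t + r - 1)`.
Each factor `t + j` is affine, hence log-concave in `t` by weighted AM-GM, so every term of the
series is log-convex in `t`; Hölder's inequality with exponents `1/α` and `1/(1 - α)` shows that a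
convergent sum of nonnegative log-convex terms is again log-convex.
-/

open Polynomial
open scoped Nat

theorem ascPochhammer_eval_rpow_mul_rpow_le {t₁ t₂ α : ℝ} (ht₁ : 0 < t₁) (ht₂ : 0 < t₂)
    (hα₀ : 0 ≤ α) (hα₁ : α ≤ 1) (n : ℕ) :
    (ascPochhammer ℝ n).eval t₁ ^ α * (ascPochhammer ℝ n).eval t₂ ^ (1 - α) ≤
      (ascPochhammer ℝ n).eval (α * t₁ + (1 - α) * t₂) := by
  induction n with
  | zero => simp
  | succ n ih =>
    have amgm : (t₁ + n) ^ α * (t₂ + n) ^ (1 - α) ≤ α * t₁ + (1 - α) * t₂ + n := by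
      convert geom_mean_le_arith_mean2_weighted hα₀ (sub_nonneg.2 hα₁)
        (by positivity : 0 ≤ t₁ + n) (by positivity : 0 ≤ t₂ + n) (by ring) using 1
      ring
    have hP₁ := ascPochhammer_pos n t₁ ht₁
    have hP₂ := ascPochhammer_pos n t₂ ht₂
    simp only [ascPochhammer_succ_eval]
    rw [mul_rpow hP₁.le (by positivity), mul_rpow hP₂.le (by positivity), mul_mul_mul_comm]
    gcongr
    exact ih.trans' (by positivity)

theorem pow_le_ascPochhammer_eval {t : ℝ} (ht : 0 ≤ t) (n : ℕ) :
    t ^ n ≤ (ascPochhammer ℝ n).eval t := by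
  induction n with
  | zero => simp
  | succ n ih =>
    rw [pow_succ, ascPochhammer_succ_eval]
    gcongr
    · exact (pow_nonneg ht n).trans ih
    · exact le_add_of_nonneg_right n.cast_nonneg

theorem summable_pow_div_factorial_div_ascPochhammer {t : ℝ} (ht : 0 < t) (y : ℝ) :
    Summable fun n : ℕ => y ^ n / n ! / (ascPochhammer ℝ n).eval t := by
  refine .of_norm_bounded (Real.summable_pow_div_factorial (|y| / t)) fun n => ?_
  have hP : t ^ n ≤ (ascPochhammer ℝ n).eval t := pow_le_ascPochhammer_eval ht.le n
  rw [norm_div, norm_div, norm_pow, Real.norm_eq_abs, Real.norm_natCast,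
    Real.norm_of_nonneg (ascPochhammer_pos n t ht).le, div_pow, div_div, div_div, mul_comm]
  gcongr

section WeightedHolder

variable {ι : Type*} {f g : ι → ℝ} {α : ℝ}

theorem summable_rpow_mul_rpow (hf : ∀ i, 0 ≤ f i) (hg : ∀ i, 0 ≤ g i) (hf_sum : Summable f)
    (hg_sum : Summable g) (hα₀ : 0 ≤ α) (hα₁ : α ≤ 1) :
    Summable fun i => f i ^ α * g i ^ (1 - α) :=
  ((hf_sum.mul_left α).add (hg_sum.mul_left (1 - α))).of_nonneg_of_le
    (fun i => by have := hf i; have := hg i; positivity)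
    fun i => geom_mean_le_arith_mean2_weighted hα₀ (sub_nonneg.2 hα₁) (hf i) (hg i) (by ring)

theorem tsum_rpow_mul_rpow_le (hf : ∀ i, 0 ≤ f i) (hg : ∀ i, 0 ≤ g i) (hf_sum : Summable f)
    (hg_sum : Summable g) (hα₀ : 0 ≤ α) (hα₁ : α ≤ 1) :
    ∑' i, f i ^ α * g i ^ (1 - α) ≤ (∑' i, f i) ^ α * (∑' i, g i) ^ (1 - α) := by
  rcases hα₀.eq_or_lt with rfl | hα₀
  · simp
  rcases hα₁.eq_or_lt with rfl | hα₁
  · simp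
  have hpq := Real.HolderConjugate.inv_one_sub_inv hα₀ hα₁
  have cancel : ∀ {β : ℝ} {h : ι → ℝ}, (∀ i, 0 ≤ h i) → 0 < β →
      (fun i => (h i ^ β) ^ β⁻¹) = h := fun hh hβ =>
    funext fun i => rpow_rpow_inv (hh i) hβ.ne'
  have := inner_le_Lp_mul_Lq_tsum_of_nonneg hpq (fun i => rpow_nonneg (hf i) α)
    (fun i => rpow_nonneg (hg i) (1 - α)) (by rwa [cancel hf hα₀])
    (by rwa [cancel hg (sub_pos.2 hα₁)])
  rwa [cancel hf hα₀, cancel hg (sub_pos.2 hα₁), one_div, inv_inv, one_div, inv_inv] at this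

end WeightedHolder

theorem div_le_div_rpow_mul_div_rpow {c p q m α : ℝ} (hc : 0 ≤ c) (hp : 0 < p) (hq : 0 < q)
    (h : p ^ α * q ^ (1 - α) ≤ m) :
    c / m ≤ (c / p) ^ α * (c / q) ^ (1 - α) := by
  have hpq : 0 < p ^ α * q ^ (1 - α) := by positivity
  calc c / m ≤ c / (p ^ α * q ^ (1 - α)) := div_le_div_of_nonneg_left hc hpq h
    _ = (c / p) ^ α * (c / q) ^ (1 - α) := by
      rw [div_rpow hc hp.le, div_rpow hc hq.le, div_mul_div_comm _ (p ^ α),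
        ← rpow_add' hc (by simp), add_sub_cancel, rpow_one]

theorem tsum_pow_div_factorial_div_ascPochhammer_logConvex {t₁ t₂ α : ℝ} (ht₁ : 0 < t₁)
    (ht₂ : 0 < t₂) (hα₀ : 0 ≤ α) (hα₁ : α ≤ 1) {y : ℝ} (hy : 0 ≤ y) :
    ∑' n : ℕ, y ^ n / n ! / (ascPochhammer ℝ n).eval (α * t₁ + (1 - α) * t₂) ≤
      (∑' n : ℕ, y ^ n / n ! / (ascPochhammer ℝ n).eval t₁) ^ α *
        (∑' n : ℕ, y ^ n / n ! / (ascPochhammer ℝ n).eval t₂) ^ (1 - α) := by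
  have hnonneg : ∀ {t : ℝ}, 0 < t → ∀ n : ℕ, 0 ≤ y ^ n / n ! / (ascPochhammer ℝ n).eval t :=
    fun ht n => by have := ascPochhammer_pos n _ ht; positivity
  have htermwise : ∀ n : ℕ, y ^ n / n ! / (ascPochhammer ℝ n).eval (α * t₁ + (1 - α) * t₂) ≤
      (y ^ n / n ! / (ascPochhammer ℝ n).eval t₁) ^ α *
        (y ^ n / n ! / (ascPochhammer ℝ n).eval t₂) ^ (1 - α) := fun n =>
    div_le_div_rpow_mul_div_rpow (by positivity) (ascPochhammer_pos n _ ht₁)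
      (ascPochhammer_pos n _ ht₂)
      (ascPochhammer_eval_rpow_mul_rpow_le ht₁ ht₂ hα₀ hα₁ n)
  have htmid : 0 < α * t₁ + (1 - α) * t₂ :=
    convex_Ioi (0 : ℝ) ht₁ ht₂ hα₀ (sub_nonneg.2 hα₁) (add_sub_cancel α 1)
  have hsum₁ := summable_pow_div_factorial_div_ascPochhammer ht₁ y
  have hsum₂ := summable_pow_div_factorial_div_ascPochhammer ht₂ y
  calc _ ≤ ∑' n : ℕ, (y ^ n / n ! / (ascPochhammer ℝ n).eval t₁) ^ α *
        (y ^ n / n ! / (ascPochhammer ℝ n).eval t₂) ^ (1 - α) :=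
        (summable_pow_div_factorial_div_ascPochhammer htmid y).tsum_le_tsum htermwise
          (summable_rpow_mul_rpow (hnonneg ht₁) (hnonneg ht₂) hsum₁ hsum₂ hα₀ hα₁)
    _ ≤ _ := tsum_rpow_mul_rpow_le (hnonneg ht₁) (hnonneg ht₂) hsum₁ hsum₂ hα₀ hα₁

theorem Real.Gamma_add_nat_eq_ascPochhammer_eval_mul {t : ℝ} (ht : 0 < t) (n : ℕ) :
    Gamma (t + n) = (ascPochhammer ℝ n).eval t * Gamma t := by
  induction n with
  | zero => simp
  | succ n ih =>
    rw [Nat.cast_succ, ← add_assoc, Gamma_add_one (by positivity), ih, ascPochhammer_succ_eval]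
    ring

theorem kGamma_pos {k s : ℝ} (hk : 0 < k) (hs : 0 < s) : 0 < kGamma k s :=
  mul_pos (rpow_pos_of_pos hk _) (Gamma_pos_of_pos (div_pos hs hk))

theorem kGamma_nat_mul_add {k s : ℝ} (hk : 0 < k) (hs : 0 < s) (n : ℕ) :
    kGamma k (n * k + s) = k ^ n * (ascPochhammer ℝ n).eval (s / k) * kGamma k s := by
  have hdiv : (n * k + s) / k = s / k + n := by field_simp; ring
  rw [kGamma, kGamma, hdiv, add_sub_right_comm, rpow_add_natCast hk.ne',
    Gamma_add_nat_eq_ascPochhammer_eval_mul (div_pos hs hk)]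
  ring

theorem kBesselI_eq_tsum {k ν : ℝ} (hk : 0 < k) (hν : -k < ν) (x : ℝ) :
    kBesselI k ν x =
      ∑' r : ℕ, (x ^ 2 / (4 * k)) ^ r / r ! / (ascPochhammer ℝ r).eval ((ν + k) / k) := by
  have hs : 0 < ν + k := by linarith
  refine tsum_congr fun r => ?_
  have hP := ascPochhammer_pos r _ (div_pos hs hk)
  have hΓ := kGamma_pos hk hs
  rw [add_assoc, kGamma_nat_mul_add hk hs, pow_mul, div_pow, mul_pow]
  field_simp

theorem kBesselI_logConvex_in_order_general (k : ℝ) (hk : 0 < k) (x : ℝ)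
    (ν₁ ν₂ : ℝ) (hν₁ : -k < ν₁) (hν₂ : -k < ν₂) (α : ℝ) (hα₀ : 0 ≤ α) (hα₁ : α ≤ 1) :
    kBesselI k (α * ν₁ + (1 - α) * ν₂) x ≤
      kBesselI k ν₁ x ^ α * kBesselI k ν₂ x ^ (1 - α) := by
  have hν : -k < α * ν₁ + (1 - α) * ν₂ :=
    convex_Ioi (-k) hν₁ hν₂ hα₀ (sub_nonneg.2 hα₁) (add_sub_cancel α 1)
  have hmid : (α * ν₁ + (1 - α) * ν₂ + k) / k =
      α * ((ν₁ + k) / k) + (1 - α) * ((ν₂ + k) / k) := by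
    field_simp; ring
  rw [kBesselI_eq_tsum hk hν₁, kBesselI_eq_tsum hk hν₂, kBesselI_eq_tsum hk hν, hmid]
  exact tsum_pow_div_factorial_div_ascPochhammer_logConvex (div_pos (by linarith) hk)
    (div_pos (by linarith) hk) hα₀ hα₁ (by positivity)

theorem kBesselI_logConvex_in_order (k : ℝ) (hk : 0 < k) (x : ℝ) (hx : 0 < x)
    (ν₁ ν₂ : ℝ) (hν₁ : -k < ν₁) (hν₂ : -k < ν₂) (α : ℝ) (hα₀ : 0 ≤ α) (hα₁ : α ≤ 1) :
    kBesselI k (α * ν₁ + (1 - α) * ν₂) x ≤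
      kBesselI k ν₁ x ^ α * kBesselI k ν₂ x ^ (1 - α) :=
  kBesselI_logConvex_in_order_general k hk x ν₁ ν₂ hν₁ hν₂ α hα₀ hα₁
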